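/- For any integer m ≥ 1, the number of Padua points, i.e., the cardinality of the set {((-1)^{i+j} cos(πj/(m+1)), (-1)^{i+j} cos(πi/m)) : 0 ≤ i + j ≤ m, i, j ∈ ℕ}, equals (m+1)(m+2)/2, which is the dimension of the space of bivariate polynomials of total degree at most m. -/

import Mathlib

/-!
Both coordinates of a Padua point carry the same sign `(-1)^(i+j)`, and `cos (π k / n)` determines
`k ≤ n` because `cos` is injective on `[0, π]`. Two index pairs giving the same point therefore
either agree, or carry opposite signs and satisfy `j + j' = m + 1`, `i + i' = m`; the latter forces
`(i + j) + (i' + j') = 2m + 1`, impossible when both sums are at most `m`. So the points are in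
bijection with the `(m+1)(m+2)/2` index pairs.
-/

open Real

/-- The Padua points of degree `m` as a subset of `ℝ × ℝ`. -/
def paduaSet (m : ℕ) : Set (ℝ × ℝ) :=
  {p | ∃ i j : ℕ, i + j ≤ m ∧
    p = ((-1 : ℝ) ^ (i + j) * Real.cos (π * j / (m + 1)),
         (-1 : ℝ) ^ (i + j) * Real.cos (π * i / m))}

lemma pi_mul_natCast_div_mem_Icc {n k : ℕ} (hn : 0 < n) (hk : k ≤ n) :
    π * k / n ∈ Set.Icc 0 π := by
  have hn' : (0 : ℝ) < n := by exact_mod_cast hn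
  refine ⟨by positivity, ?_⟩
  rw [div_le_iff₀ hn']
  exact mul_le_mul_of_nonneg_left (by exact_mod_cast hk) pi_pos.le

lemma eq_of_cos_pi_mul_natCast_div_eq {n k l : ℕ} (hn : 0 < n) (hk : k ≤ n) (hl : l ≤ n)
    (h : cos (π * k / n) = cos (π * l / n)) : k = l := by
  have hangle := injOn_cos (pi_mul_natCast_div_mem_Icc hn hk) (pi_mul_natCast_div_mem_Icc hn hl) h
  have hn' : (n : ℝ) ≠ 0 := by positivity
  field_simp at hangle
  exact_mod_cast hangle

lemma add_eq_of_cos_pi_mul_natCast_div_eq_neg {n k l : ℕ} (hn : 0 < n) (hk : k ≤ n)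
    (hl : l ≤ n) (h : cos (π * k / n) = -cos (π * l / n)) : k + l = n := by
  have hn' : (n : ℝ) ≠ 0 := by positivity
  have hreflect : -cos (π * l / n) = cos (π * ↑(n - l) / n) := by
    rw [Nat.cast_sub hl, ← cos_pi_sub]
    congr 1
    field_simp
  rw [hreflect] at h
  have := eq_of_cos_pi_mul_natCast_div_eq hn hk (Nat.sub_le n l) h
  omega

lemma eq_neg_one_pow_add_mul_of_neg_one_pow_mul_eq {R : Type*} [Ring R] {p q : ℕ} {x y : R}
    (h : (-1) ^ p * x = (-1) ^ q * y) : x = (-1) ^ (p + q) * y := by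
  calc x = (-1) ^ p * ((-1) ^ p * x) := by rw [← mul_assoc, ← pow_add, ← two_mul, pow_mul]; simp
    _ = (-1) ^ (p + q) * y := by rw [h, ← mul_assoc, ← pow_add]

noncomputable def paduaMap (m : ℕ) (p : ℕ × ℕ) : ℝ × ℝ :=
  ((-1 : ℝ) ^ (p.1 + p.2) * cos (π * p.2 / (m + 1)),
   (-1 : ℝ) ^ (p.1 + p.2) * cos (π * p.1 / m))

lemma paduaSet_eq_image (m : ℕ) :
    paduaSet m = paduaMap m '' {p : ℕ × ℕ | p.1 + p.2 ≤ m} := by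
  ext x
  constructor
  · rintro ⟨i, j, hij, rfl⟩
    exact ⟨(i, j), hij, rfl⟩
  · rintro ⟨⟨i, j⟩, hij, rfl⟩
    exact ⟨i, j, hij, rfl⟩

lemma paduaMap_injOn {m : ℕ} (hm : 0 < m) :
    Set.InjOn (paduaMap m) {p : ℕ × ℕ | p.1 + p.2 ≤ m} := by
  rintro ⟨i, j⟩ (hij : i + j ≤ m) ⟨i', j'⟩ (hij' : i' + j' ≤ m) heq
  obtain ⟨hx, hy⟩ := Prod.mk.inj heq
  dsimp only at hx hy
  replace hx := eq_neg_one_pow_add_mul_of_neg_one_pow_mul_eq hx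
  replace hy := eq_neg_one_pow_add_mul_of_neg_one_pow_mul_eq hy
  have hx' : cos (π * j / ((m + 1 : ℕ) : ℝ)) = (-1) ^ (i + j + (i' + j')) *
      cos (π * j' / ((m + 1 : ℕ) : ℝ)) := by push_cast; exact hx
  rcases Nat.even_or_odd (i + j + (i' + j')) with hpar | hpar
  · rw [hpar.neg_one_pow, one_mul] at hx' hy
    have hj := eq_of_cos_pi_mul_natCast_div_eq (Nat.succ_pos m) (by omega) (by omega) hx'
    have hi := eq_of_cos_pi_mul_natCast_div_eq hm (by omega) (by omega) hy
    rw [hi, hj]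
  · rw [hpar.neg_one_pow, neg_one_mul] at hx' hy
    have hj := add_eq_of_cos_pi_mul_natCast_div_eq_neg (Nat.succ_pos m) (by omega) (by omega) hx'
    have hi := add_eq_of_cos_pi_mul_natCast_div_eq_neg hm (by omega) (by omega) hy
    omega

open Finset.HasAntidiagonal in
lemma setOf_add_le_eq_biUnion_antidiagonal (m : ℕ) :
    {p : ℕ × ℕ | p.1 + p.2 ≤ m} =
      ↑((Finset.range (m + 1)).biUnion antidiagonal) := by
  ext p
  simp

open Finset.HasAntidiagonal in
lemma ncard_setOf_add_le (m : ℕ) :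
    {p : ℕ × ℕ | p.1 + p.2 ≤ m}.ncard = (m + 1) * (m + 2) / 2 := by
  have hdisj : (↑(Finset.range (m + 1)) : Set ℕ).PairwiseDisjoint antidiagonal := by
    intro k _ l _ hkl
    rw [Function.onFun, Finset.disjoint_left]
    intro p hk hl
    exact hkl ((mem_antidiagonal.1 hk).symm.trans (mem_antidiagonal.1 hl))
  rw [setOf_add_le_eq_biUnion_antidiagonal, Set.ncard_coe_finset, Finset.card_biUnion hdisj]
  simp only [Finset.Nat.card_antidiagonal]
  rw [show ∑ k ∈ Finset.range (m + 1), (k + 1) = ∑ k ∈ Finset.range (m + 2), k from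
    (Finset.sum_range_succ' (fun k => k) (m + 1)).symm, Finset.sum_range_id, Nat.mul_comm]
  rfl

theorem stmt0 (m : ℕ) (hm : 1 ≤ m) :
    (paduaSet m).ncard = (m + 1) * (m + 2) / 2 := by
  rw [paduaSet_eq_image, (paduaMap_injOn hm).ncard_image, ncard_setOf_add_le]
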